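/- Let F be a piecewise translation of m = d+1 branches in ℝ^d whose translation vectors have rank d, assume the torus rotation R : T → T, R(φ) = φ + π(v_0), is ergodic, and assume the restriction of F to its attractor A is minimal (every F-orbit of a point of A is dense in A). Then the fate map 𝓕 : Ω → {0,…,d}^ℕ is injective. -/

import Mathlib

/-!
If `x` and `y` have the same fate, their orbits are translates of each other,
`F^[n] x = F^[n] y + (x - y)`, so every cluster point of the orbit of `y`, moved by `x - y`,
lies in the attractor `A`. Ergodicity of the rotation provides a cluster point `u` of the orbit
of `y` whose own orbit never meets the overlaps of the pieces, the only places where `F` is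
discontinuous on `Ω`; the whole orbit of `u` then consists of cluster points of the orbit of
`y`, and by minimality so does `A`. Hence `A + (x - y) ⊆ A`, and a nonempty bounded set is
invariant under no nonzero translation.
-/

open MeasureTheory Topology Filter Set

/-- A piecewise translation map (PWT) of `m` branches in `ℝ^d`: a region `Ω`
partitioned into regions `P 0, …, P (m-1)` with null boundaries and pairwise disjoint
interiors, together with translation vectors `v i` such that `P i + v i ⊆ Ω`, and a fixed
measurable resolution `idx` of the ambiguity on overlapping boundaries. -/
structure PWT (d m : ℕ) where
  Om : Set (Fin d → ℝ)
  P : Fin m → Set (Fin d → ℝ)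
  v : Fin m → (Fin d → ℝ)
  idx : (Fin d → ℝ) → Fin m
  compact_Om : IsCompact Om
  region_Om : Om = closure (interior Om)
  compact_P : ∀ i, IsCompact (P i)
  region_P : ∀ i, P i = closure (interior (P i))
  union_P : Om = ⋃ i, P i
  disj_P : ∀ i j, i ≠ j → interior (P i) ∩ interior (P j) = ∅
  null_bd_P : ∀ i, volume (frontier (P i)) = 0
  translate_mem : ∀ i, ∀ x ∈ P i, x + v i ∈ Om
  idx_mem : ∀ x ∈ Om, x ∈ P (idx x)
  idx_meas : Measurable idx

namespace PWT

variable {d m : ℕ}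

/-- The piecewise translation map `F(x) = x + v_{i(x)}`. -/
def F (T : PWT d m) (x : Fin d → ℝ) : Fin d → ℝ := x + T.v (T.idx x)

/-- `Ω_0 = Ω`, `Ω_{n+1} = closure (F(Ω_n))`. -/
def OmSeq (T : PWT d m) : ℕ → Set (Fin d → ℝ)
  | 0 => T.Om
  | n + 1 => closure (T.F '' T.OmSeq n)

/-- The attractor `A = ⋂ₙ Ω_n`. -/
def attractor (T : PWT d m) : Set (Fin d → ℝ) := ⋂ n, T.OmSeq n

/-- The fate map `𝓕(x) = (i(x), i(F x), i(F² x), …)`. -/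
def fate (T : PWT d m) (x : Fin d → ℝ) : ℕ → Fin m := fun n => T.idx (T.F^[n] x)

/-- The matrix whose columns are the lattice generators `v_1 - v_0, …, v_d - v_0`. -/
noncomputable def latMatrix (T : PWT d (d + 1)) : Matrix (Fin d) (Fin d) ℝ :=
  Matrix.of fun i j => (T.v j.succ - T.v 0) i

/-- The canonical projection `π : ℝ^d → T = ℝ^d/L ≅ (ℝ/ℤ)^d`, expressed in the
coordinates given by the lattice basis `v_1 - v_0, …, v_d - v_0` of `L`. -/
noncomputable def torusProj (T : PWT d (d + 1)) (x : Fin d → ℝ) : Fin d → AddCircle (1 : ℝ) :=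
  fun i => ((T.latMatrix⁻¹.mulVec x) i : AddCircle (1 : ℝ))

end PWT

theorem exists_forall_add_notMem_of_measure_eq_zero {G ι : Type*} [MeasurableSpace G] [AddGroup G]
    [MeasurableAdd G] [Countable ι] (μ : Measure G) [μ.IsAddRightInvariant] [NeZero μ]
    {B : Set G} (hB : μ B = 0) (c : ι → G) : ∃ z, ∀ i, z + c i ∉ B := by
  have hnull : μ (⋃ i, (· + c i) ⁻¹' B) = 0 :=
    measure_iUnion_null fun i => (measure_preimage_add_right μ (c i) B).trans hB
  by_contra! h
  have hcover : (univ : Set G) ⊆ ⋃ i, (· + c i) ⁻¹' B := fun z _ => mem_iUnion.2 (h z)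
  exact Measure.measure_univ_ne_zero.2 (NeZero.ne μ) (measure_mono_null hcover hnull)

theorem IsCompact.exists_mapClusterPt_of_mapClusterPt_comp {X Y ι : Type*} [TopologicalSpace X]
    [TopologicalSpace Y] [T2Space Y] {K : Set X} (hK : IsCompact K) {l : Filter ι} {u : ι → X}
    (hu : ∀ i, u i ∈ K) {f : X → Y} (hf : Continuous f) {y : Y} (h : MapClusterPt y l (f ∘ u)) :
    ∃ x ∈ K, f x = y ∧ MapClusterPt x l u := by
  obtain ⟨U, hUl, hUy⟩ := mapClusterPt_iff_ultrafilter.1 h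
  obtain ⟨x, hxK, hUx⟩ := hK.ultrafilter_le_nhds (U.map u)
    (le_principal_iff.2 (mem_map.2 (univ_mem' hu)))
  exact ⟨x, hxK, tendsto_nhds_unique ((hf.tendsto x).comp hUx) hUy,
    mapClusterPt_iff_ultrafilter.2 ⟨U, hUl, hUx⟩⟩

theorem Ergodic.mapClusterPt_add_nsmul {G : Type*} [AddCommGroup G] [TopologicalSpace G]
    [IsTopologicalAddGroup G] [CompactSpace G] [MeasurableSpace G] [OpensMeasurableSpace G]
    {μ : Measure G} [μ.IsOpenPosMeasure] {a : G} (h : Ergodic (· + a) μ) (x y : G) :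
    MapClusterPt y atTop fun n : ℕ => x + n • a := by
  have hdense : DenseRange fun n : ℤ => n • a :=
    DenseRange.zsmul_of_ergodic_add_left (by simpa only [add_comm] using h)
  have hclus : MapClusterPt (y - x) atTop fun n : ℕ => n • a := by
    rw [mapClusterPt_atTop_nsmul_iff_mem_topologicalClosure_zmultiples, ← SetLike.mem_coe,
      AddSubgroup.topologicalClosure_coe, AddSubgroup.coe_zmultiples, hdense.closure_eq]
    exact mem_univ _
  simpa [Function.comp_def] using hclus.continuousAt_comp (continuous_const_add x).continuousAt

theorem eq_zero_of_isBounded_of_forall_add_mem {E : Type*} [NormedAddCommGroup E]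
    [NormedSpace ℝ E] {K : Set E} (hK : Bornology.IsBounded K) (hne : K.Nonempty) {w : E}
    (h : ∀ k ∈ K, k + w ∈ K) : w = 0 := by
  obtain ⟨k, hk⟩ := hne
  have hiter : ∀ n : ℕ, k + n • w ∈ K := by
    intro n
    induction n with
    | zero => simpa using hk
    | succ n ih => simpa [succ_nsmul, add_assoc] using h _ ih
  obtain ⟨R, hR⟩ := hK.subset_closedBall k
  have hbound : ∀ n : ℕ, n * ‖w‖ ≤ R := fun n => by
    simpa [dist_eq_norm, RCLike.norm_nsmul ℝ] using hR (hiter n)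
  by_contra hw
  have hpos : 0 < ‖w‖ := norm_pos_iff.2 hw
  obtain ⟨n, hn⟩ := exists_nat_gt (R / ‖w‖)
  rw [div_lt_iff₀ hpos] at hn
  linarith [hbound n]

namespace PWT

section Dynamics

variable {d m : ℕ} (T : PWT d m)

theorem mapsTo_F : MapsTo T.F T.Om T.Om := fun x hx => T.translate_mem _ x (T.idx_mem x hx)

theorem isClosed_OmSeq : ∀ n, IsClosed (T.OmSeq n)
  | 0 => T.compact_Om.isClosed
  | _ + 1 => isClosed_closure

theorem antitone_OmSeq : Antitone T.OmSeq := by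
  refine antitone_nat_of_succ_le fun n => ?_
  induction n with
  | zero => exact closure_minimal (T.mapsTo_F.image_subset) T.compact_Om.isClosed
  | succ n ih => exact closure_mono (image_mono ih)

theorem iterate_F_mem_OmSeq {x : Fin d → ℝ} (hx : x ∈ T.Om) (n : ℕ) : T.F^[n] x ∈ T.OmSeq n := by
  induction n with
  | zero => exact hx
  | succ n ih =>
    rw [Function.iterate_succ_apply']
    exact subset_closure (mem_image_of_mem _ ih)

theorem attractor_subset_Om : T.attractor ⊆ T.Om := iInter_subset T.OmSeq 0

theorem mem_attractor_of_mapClusterPt {x u : Fin d → ℝ} (hx : x ∈ T.Om)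
    (hu : MapClusterPt u atTop fun n => T.F^[n] x) : u ∈ T.attractor :=
  mem_iInter.2 fun N => (T.isClosed_OmSeq N).mem_of_mapClusterPt hu
    (eventually_atTop.2 ⟨N, fun n hn => T.antitone_OmSeq hn (T.iterate_F_mem_OmSeq hx n)⟩)

theorem iterate_F_eq_add_of_fate_eq {x y : Fin d → ℝ} (h : T.fate x = T.fate y) (n : ℕ) :
    T.F^[n] x = T.F^[n] y + (x - y) := by
  induction n with
  | zero => simp
  | succ n ih =>
    have hidx : T.idx (T.F^[n] x) = T.idx (T.F^[n] y) := congrFun h n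
    rw [Function.iterate_succ_apply', Function.iterate_succ_apply', F, F, hidx, ih]
    abel

theorem add_mem_attractor_of_fate_eq {x y u : Fin d → ℝ} (hx : x ∈ T.Om)
    (h : T.fate x = T.fate y) (hu : MapClusterPt u atTop fun n => T.F^[n] y) :
    u + (x - y) ∈ T.attractor := by
  refine T.mem_attractor_of_mapClusterPt hx ?_
  simpa [Function.comp_def, T.iterate_F_eq_add_of_fate_eq h] using
    hu.continuousAt_comp (continuous_add_const (x - y)).continuousAt

def overlap : Set (Fin d → ℝ) := ⋃ (i) (j) (_ : i ≠ j), T.P i ∩ T.P j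

theorem overlap_subset_frontier : T.overlap ⊆ ⋃ i, frontier (T.P i) := by
  simp only [overlap, iUnion_subset_iff]
  rintro i j hij u ⟨hui, huj⟩
  refine mem_iUnion.2 ⟨i, subset_closure hui, fun hint => ?_⟩
  have hdisj : Disjoint (interior (T.P i)) (closure (interior (T.P j))) :=
    (disjoint_iff_inter_eq_empty.2 (T.disj_P i j hij)).closure_right isOpen_interior
  rw [← T.region_P j] at hdisj
  exact hdisj.notMem_of_mem_left hint huj

theorem volume_overlap : volume T.overlap = 0 :=
  measure_mono_null T.overlap_subset_frontier (measure_iUnion_null T.null_bd_P)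

theorem eventually_idx_eq {u : Fin d → ℝ} (hu : u ∈ T.Om) (hu' : u ∉ T.overlap) :
    ∀ᶠ z in 𝓝[T.Om] u, T.idx z = T.idx u := by
  have hnot : ∀ j ≠ T.idx u, u ∉ T.P j := fun j hj hj' =>
    hu' (mem_iUnion₂.2 ⟨j, T.idx u, mem_iUnion.2 ⟨hj, hj', T.idx_mem u hu⟩⟩)
  have hnear : ∀ᶠ z in 𝓝 u, ∀ j ≠ T.idx u, z ∉ T.P j :=
    eventually_all.2 fun j => (eventually_imp_distrib_left.2 fun hj =>
      (T.compact_P j).isClosed.isOpen_compl.mem_nhds (hnot j hj))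
  filter_upwards [nhdsWithin_le_nhds hnear, self_mem_nhdsWithin] with z hz hzOm
  by_contra hne
  exact hz _ hne (T.idx_mem z hzOm)

theorem continuousWithinAt_F {u : Fin d → ℝ} (hu : u ∈ T.Om) (hu' : u ∉ T.overlap) :
    ContinuousWithinAt T.F T.Om u :=
  (continuous_add_const (T.v (T.idx u))).continuousWithinAt.congr_of_eventuallyEq
    ((T.eventually_idx_eq hu hu').mono fun z hz => by simp [F, hz]) rfl

theorem mapClusterPt_F {y u : Fin d → ℝ} (hy : y ∈ T.Om)
    (hu : MapClusterPt u atTop fun n => T.F^[n] y) (hu' : u ∉ T.overlap) :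
    MapClusterPt (T.F u) atTop fun n => T.F^[n] y := by
  have horbit : ∀ n, T.F^[n] y ∈ T.Om := fun n => T.mapsTo_F.iterate n hy
  have huOm : u ∈ T.Om :=
    T.compact_Om.isClosed.mem_of_mapClusterPt hu (Eventually.of_forall horbit)
  have hshift : MapClusterPt (T.F u) atTop fun n => T.F^[n + 1] y := by
    simp only [Function.iterate_succ_apply']
    refine hu.tendsto_comp' ((T.continuousWithinAt_F huOm hu').tendsto.mono_left ?_)
    exact inf_le_inf_left _ (le_principal_iff.2 (mem_map.2 (univ_mem' horbit)))
  exact hshift.of_comp (tendsto_add_atTop_nat 1)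

theorem mapClusterPt_iterate_F {y u : Fin d → ℝ} (hy : y ∈ T.Om)
    (hu : MapClusterPt u atTop fun n => T.F^[n] y) (havoid : ∀ n, T.F^[n] u ∉ T.overlap) :
    ∀ n, MapClusterPt (T.F^[n] u) atTop fun n => T.F^[n] y := by
  intro n
  induction n with
  | zero => exact hu
  | succ n ih =>
    rw [Function.iterate_succ_apply']
    exact T.mapClusterPt_F hy ih (havoid n)

theorem mapClusterPt_of_mem_attractor
    (hmin : ∀ x ∈ T.attractor, T.attractor ⊆ closure (range fun n : ℕ => T.F^[n] x))
    {y u : Fin d → ℝ} (hy : y ∈ T.Om) (hu : MapClusterPt u atTop fun n => T.F^[n] y)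
    (havoid : ∀ n, T.F^[n] u ∉ T.overlap) {b : Fin d → ℝ} (hb : b ∈ T.attractor) :
    MapClusterPt b atTop fun n => T.F^[n] y := by
  have hsub : range (fun n => T.F^[n] u) ⊆ {b | MapClusterPt b atTop fun n => T.F^[n] y} :=
    range_subset_iff.2 (T.mapClusterPt_iterate_F hy hu havoid)
  exact closure_minimal hsub isClosed_setOfPred_clusterPt
    (hmin u (T.mem_attractor_of_mapClusterPt hy hu) hb)

end Dynamics

section Torus

open scoped Matrix

variable {d : ℕ} (T : PWT d (d + 1))

theorem torusProj_add (x y : Fin d → ℝ) :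
    T.torusProj (x + y) = T.torusProj x + T.torusProj y := by
  funext i
  simp [torusProj, Matrix.mulVec_add]

theorem torusProj_nsmul (n : ℕ) (x : Fin d → ℝ) : T.torusProj (n • x) = n • T.torusProj x := by
  funext i
  simp only [torusProj, Matrix.mulVec_smul, Pi.smul_apply, AddCircle.coe_nsmul]

theorem continuous_torusProj : Continuous T.torusProj :=
  continuous_pi fun i => (AddCircle.continuous_mk' 1).comp
    ((continuous_apply i).comp (Matrix.mulVecLin T.latMatrix⁻¹).continuous_of_finiteDimensional)

variable {T}

theorem isUnit_det_latMatrix (hrank : LinearIndependent ℝ (fun i : Fin d => T.v i.succ - T.v 0)) :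
    IsUnit T.latMatrix.det :=
  (Matrix.isUnit_iff_isUnit_det _).1 (Matrix.linearIndependent_cols_iff_isUnit.1 hrank)

theorem torusProj_v (hrank : LinearIndependent ℝ (fun i : Fin d => T.v i.succ - T.v 0))
    (i : Fin (d + 1)) : T.torusProj (T.v i) = T.torusProj (T.v 0) := by
  induction i using Fin.cases with
  | zero => rfl
  | succ j =>
    have hcol : T.v j.succ - T.v 0 = T.latMatrix *ᵥ Pi.single j 1 := by
      rw [Matrix.mulVec_single]
      funext i
      simp [latMatrix]
    have hgen : T.torusProj (T.v j.succ - T.v 0) = 0 := by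
      funext i
      simp only [torusProj, hcol, Matrix.mulVec_mulVec,
        Matrix.nonsing_inv_mul _ (isUnit_det_latMatrix hrank), Matrix.one_mulVec]
      rcases eq_or_ne i j with rfl | hij
      · simp
      · simp [Pi.single_eq_of_ne hij]
    rw [← sub_add_cancel (T.v j.succ) (T.v 0), torusProj_add, hgen, zero_add]

theorem torusProj_iterate_F (hrank : LinearIndependent ℝ (fun i : Fin d => T.v i.succ - T.v 0))
    (x : Fin d → ℝ) (n : ℕ) :
    T.torusProj (T.F^[n] x) = T.torusProj x + n • T.torusProj (T.v 0) := by
  induction n with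
  | zero => simp
  | succ n ih =>
    rw [Function.iterate_succ_apply', F, torusProj_add, torusProj_v hrank, ih, succ_nsmul,
      add_assoc]

theorem exists_eq_add_latMatrix_mulVec_of_torusProj_eq
    (hrank : LinearIndependent ℝ (fun i : Fin d => T.v i.succ - T.v 0)) {x y : Fin d → ℝ}
    (h : T.torusProj x = T.torusProj y) :
    ∃ ζ : Fin d → ℤ, x = y + T.latMatrix *ᵥ fun i => (ζ i : ℝ) := by
  have hcoord : ∀ i, ∃ k : ℤ, (k : ℝ) = (T.latMatrix⁻¹ *ᵥ (x - y)) i := by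
    intro i
    have hi : ((T.latMatrix⁻¹ *ᵥ x) i : AddCircle (1 : ℝ)) = ((T.latMatrix⁻¹ *ᵥ y) i : _) :=
      congrFun h i
    rw [← sub_eq_zero, ← AddCircle.coe_sub, AddCircle.coe_eq_zero_iff] at hi
    simpa [Matrix.mulVec_sub] using hi
  choose ζ hζ using hcoord
  refine ⟨ζ, ?_⟩
  rw [funext hζ, Matrix.mulVec_mulVec, Matrix.mul_nonsing_inv _ (isUnit_det_latMatrix hrank),
    Matrix.one_mulVec, add_sub_cancel]

/-- By ergodicity the orbit of `π y` accumulates at every point of the torus, in particular at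
`π z` for a point `z` chosen off the countably many null translates of `overlap` by
`n • v 0 + L`. -/
theorem exists_mapClusterPt_forall_iterate_F_notMem_overlap
    (hrank : LinearIndependent ℝ (fun i : Fin d => T.v i.succ - T.v 0))
    (herg : Ergodic (fun φ : Fin d → AddCircle (1 : ℝ) => φ + T.torusProj (T.v 0)) volume)
    {y : Fin d → ℝ} (hy : y ∈ T.Om) :
    ∃ u, (MapClusterPt u atTop fun n => T.F^[n] y) ∧ ∀ n, T.F^[n] u ∉ T.overlap := by
  obtain ⟨z, hz⟩ := exists_forall_add_notMem_of_measure_eq_zero volume T.volume_overlap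
    fun p : ℕ × (Fin d → ℤ) => p.1 • T.v 0 + T.latMatrix *ᵥ fun i => (p.2 i : ℝ)
  have hclus : MapClusterPt (T.torusProj z) atTop (T.torusProj ∘ fun n => T.F^[n] y) := by
    simpa [Function.comp_def, torusProj_iterate_F hrank] using
      herg.mapClusterPt_add_nsmul (T.torusProj y) (T.torusProj z)
  obtain ⟨u, -, huz, hu⟩ := T.compact_Om.exists_mapClusterPt_of_mapClusterPt_comp
    (fun n => T.mapsTo_F.iterate n hy) T.continuous_torusProj hclus
  refine ⟨u, hu, fun n hn => ?_⟩
  obtain ⟨ζ, hζ⟩ := exists_eq_add_latMatrix_mulVec_of_torusProj_eq hrank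
    (x := T.F^[n] u) (y := z + n • T.v 0)
    (by rw [torusProj_iterate_F hrank, torusProj_add, torusProj_nsmul, huz])
  exact hz (n, ζ) (by rwa [← add_assoc, ← hζ])

end Torus

end PWT

/-- For a piecewise translation of `m = d+1` branches in `ℝ^d` with
translation vectors of rank `d`, ergodic torus rotation factor, and minimal restriction
`F|_A` to the attractor, the fate map `𝓕` is injective on `Ω`. -/
theorem pwt_fate_injective {d : ℕ} (T : PWT d (d + 1))
    (hrank : LinearIndependent ℝ (fun i : Fin d => T.v i.succ - T.v 0))
    (herg : Ergodic (fun φ : Fin d → AddCircle (1 : ℝ) => φ + T.torusProj (T.v 0)) volume)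
    (hmin : ∀ x ∈ T.attractor,
      T.attractor ⊆ closure (Set.range fun n : ℕ => T.F^[n] x)) :
    ∀ x ∈ T.Om, ∀ y ∈ T.Om, T.fate x = T.fate y → x = y := by
  intro x hx y hy hfate
  obtain ⟨u, hu, havoid⟩ :=
    PWT.exists_mapClusterPt_forall_iterate_F_notMem_overlap hrank herg hy
  have hinv : ∀ b ∈ T.attractor, b + (x - y) ∈ T.attractor := fun b hb =>
    T.add_mem_attractor_of_fate_eq hx hfate (T.mapClusterPt_of_mem_attractor hmin hy hu havoid hb)
  have hbdd : Bornology.IsBounded T.attractor :=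
    T.compact_Om.isBounded.subset T.attractor_subset_Om
  exact sub_eq_zero.1 (eq_zero_of_isBounded_of_forall_add_mem hbdd
    ⟨u, T.mem_attractor_of_mapClusterPt hy hu⟩ hinv)
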